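/- arXiv:2304.14127 — 10 statements merged into one kernel-verified Lean document; each statement's English description precedes it below -/
import Mathlib

section
/- Let t(p) = w/p + d + c(p-1) with w, d, c ≥ 0 and let p_max = min(P, p̄, p̃) where p̃ minimizes t over positive integers. Then for all integers 1 ≤ p < q ≤ p_max, t(p) ≥ t(q) and p·t(p) ≤ q·t(q). -/
/-- For t(p) = w/p + d + c(p-1) with w, d, c ≥ 0, and p_max = min(P, p̄, p̃) where p̃
minimizes t over positive integers, t is non-increasing and the area p·t(p) is
non-decreasing on [1, p_max]. -/
theorem stmt2 (w d c : ℝ) (hw : 0 ≤ w) (hd : 0 ≤ d) (hc : 0 ≤ c)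
    (P pbar ptil : ℕ) (hptil : 1 ≤ ptil)
    (hmin : ∀ q : ℕ, 1 ≤ q →
      w / (ptil : ℝ) + d + c * ((ptil : ℝ) - 1) ≤ w / (q : ℝ) + d + c * ((q : ℝ) - 1)) :
    ∀ p q : ℕ, 1 ≤ p → p < q → q ≤ min P (min pbar ptil) →
      (w / (q : ℝ) + d + c * ((q : ℝ) - 1) ≤ w / (p : ℝ) + d + c * ((p : ℝ) - 1)) ∧
      ((p : ℝ) * (w / (p : ℝ) + d + c * ((p : ℝ) - 1)) ≤
        (q : ℝ) * (w / (q : ℝ) + d + c * ((q : ℝ) - 1))) := by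
  intro p q hp hpq hqmax
  have hqpt : q ≤ ptil := le_trans (le_trans hqmax (min_le_right _ _)) (min_le_right _ _)
  have hq2 : 2 ≤ q := by omega
  have hpt2 : 2 ≤ ptil := by omega
  set m : ℕ := ptil - 1 with hm
  have hm1 : 1 ≤ m := by omega
  have hmeq : (m : ℝ) = (ptil : ℝ) - 1 := by
    have : (m : ℕ) + 1 = ptil := by omega
    push_cast [← this]; ring
  have hp0 : (0:ℝ) < p := by exact_mod_cast hp
  have hq0 : (0:ℝ) < q := by positivity
  have hm0 : (0:ℝ) < m := by exact_mod_cast hm1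
  have hpt0 : (0:ℝ) < ptil := by positivity
  -- from minimality: c * (m * ptil) ≤ w
  have h := hmin m hm1
  have hcle : c ≤ w / (m:ℝ) - w / (ptil:ℝ) := by
    have : c * ((ptil:ℝ) - 1) - c * ((m:ℝ) - 1) = c := by rw [hmeq]; ring
    linarith
  have hdsub : w / (m:ℝ) - w / (ptil:ℝ) = (w * ptil - m * w) / ((m:ℝ) * ptil) :=
    div_sub_div w w hm0.ne' hpt0.ne'
  have hcw0 : c * ((m:ℝ) * ptil) ≤ w := by
    rw [hdsub] at hcle
    have := (le_div_iff₀ (mul_pos hm0 hpt0)).mp hcle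
    nlinarith [hmeq]
  have hpm : p ≤ m := by omega
  have hpmr : (p:ℝ) ≤ m := by exact_mod_cast hpm
  have hqptr : (q:ℝ) ≤ ptil := by exact_mod_cast hqpt
  have hcw : c * ((p:ℝ) * q) ≤ w := by
    have hmul : (p:ℝ) * q ≤ (m:ℝ) * ptil :=
      mul_le_mul hpmr hqptr hq0.le hm0.le
    nlinarith
  have hpqr : (p:ℝ) < q := by exact_mod_cast hpq
  constructor
  · -- time non-increasing
    have hdsub2 : w / (p:ℝ) - w / (q:ℝ) = (w * q - p * w) / ((p:ℝ) * q) :=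
      div_sub_div w w hp0.ne' hq0.ne'
    have : c * ((q:ℝ) - p) ≤ (w * q - p * w) / ((p:ℝ) * q) := by
      rw [le_div_iff₀ (mul_pos hp0 hq0)]
      nlinarith [mul_le_mul_of_nonneg_right hcw (sub_nonneg.mpr hpqr.le)]
    linarith [hdsub2 ▸ this]
  · -- area non-decreasing
    have h1 : (p:ℝ) * (w / p) = w := by field_simp
    have h2 : (q:ℝ) * (w / q) = w := by field_simp
    have e1 : (p:ℝ) * (w / p + d + c * ((p:ℝ) - 1)) = w + p * d + c * (p * (p - 1)) := by
      rw [mul_add, mul_add, h1]; ring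
    have e2 : (q:ℝ) * (w / q + d + c * ((q:ℝ) - 1)) = w + q * d + c * (q * (q - 1)) := by
      rw [mul_add, mul_add, h2]; ring
    rw [e1, e2]
    have hp1 : (1:ℝ) ≤ (p:ℝ) := by exact_mod_cast hp
    have hsq : (p:ℝ) * ((p:ℝ) - 1) ≤ (q:ℝ) * ((q:ℝ) - 1) := by
      nlinarith [mul_nonneg (sub_nonneg.mpr hpqr.le) (show (0:ℝ) ≤ (q:ℝ) + (p:ℝ) - 1 by linarith)]
    linarith [mul_le_mul_of_nonneg_left hsq hc, mul_le_mul_of_nonneg_right hpqr.le hd]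
end

section
/- For any constants α ≥ 1 and β > 0, the quantity μ = (α + β + 1 − sqrt((α+β+1)² − 4β)) / (2β) is well-defined ((α+β+1)² − 4β ≥ 0), satisfies 0 < μ ≤ 1/2, and satisfies β + α/(1−μ) = 1/μ. -/
/-- For α ≥ 1 and β > 0, μ = (α+β+1 − √((α+β+1)² − 4β))/(2β) is well-defined,
satisfies 0 < μ ≤ 1/2, and β + α/(1−μ) = 1/μ. -/
theorem stmt3 (α β μ : ℝ) (hα : 1 ≤ α) (hβ : 0 < β)
    (hμ : μ = (α + β + 1 - Real.sqrt ((α + β + 1) ^ 2 - 4 * β)) / (2 * β)) :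
    0 ≤ (α + β + 1) ^ 2 - 4 * β ∧ 0 < μ ∧ μ ≤ 1 / 2 ∧ β + α / (1 - μ) = 1 / μ := by
  have hD : 0 ≤ (α + β + 1) ^ 2 - 4 * β := by nlinarith
  set r := Real.sqrt ((α + β + 1) ^ 2 - 4 * β) with hr
  have hr0 : 0 ≤ r := Real.sqrt_nonneg _
  have hr2 : r ^ 2 = (α + β + 1) ^ 2 - 4 * β := Real.sq_sqrt hD
  have hrlt : r < α + β + 1 := by nlinarith
  have hrge : α + 1 ≤ r := by nlinarith
  have hμpos : 0 < μ := by
    rw [hμ]; exact div_pos (by linarith) (by linarith)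
  have hμhalf : μ ≤ 1 / 2 := by
    rw [hμ, div_le_div_iff₀ (by linarith) (by norm_num)]
    linarith
  have hkey : β * μ ^ 2 - (α + β + 1) * μ + 1 = 0 := by
    have h2b : (2 * β) ≠ 0 := by positivity
    rw [hμ]
    field_simp
    nlinarith [hr2]
  have hμ1 : 1 - μ ≠ 0 := by linarith
  have hμne : μ ≠ 0 := ne_of_gt hμpos
  refine ⟨hD, hμpos, hμhalf, ?_⟩
  field_simp
  nlinarith [hkey]
end

section
/- Let α ≥ 1, β > 0, μ ∈ (0, 1/2] satisfy β + α/(1−μ) = 1/μ and β ≥ μ(α−1)/(1−μ)². Then for all z ∈ [0,1], the function f(z) = (1 − μ − zαμ − (1−z)μ)/((1−μ)β) − μz + z − 1 satisfies f(z) ≤ 0. -/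
/-- Key inequality of the makespan analysis: under the stated constraints on α, β, μ,
the function f(z) = (1 − μ − zαμ − (1−z)μ)/((1−μ)β) − μz + z − 1 is nonpositive on [0,1]. -/
theorem stmt4 (α β μ : ℝ) (hα : 1 ≤ α) (hβ : 0 < β) (hμ0 : 0 < μ) (hμ1 : μ ≤ 1 / 2)
    (heq : β + α / (1 - μ) = 1 / μ) (hcon : μ * (α - 1) / (1 - μ) ^ 2 ≤ β) :
    ∀ z : ℝ, 0 ≤ z → z ≤ 1 →
      (1 - μ - z * α * μ - (1 - z) * μ) / ((1 - μ) * β) - μ * z + z - 1 ≤ 0 := by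
  intro z hz0 hz1
  have h1 : (0:ℝ) < 1 - μ := by linarith
  have hD : (0:ℝ) < (1 - μ) * β := by positivity
  have heq' : μ * (1 - μ) * β + μ * α = 1 - μ := by
    field_simp at heq; nlinarith [heq]
  have hcon' : μ * (α - 1) ≤ β * (1 - μ)^2 := by
    rw [div_le_iff₀ (by positivity)] at hcon; linarith [hcon]
  have key : (1 - μ - z * α * μ - (1 - z) * μ) ≤ (1 + μ * z - z) * ((1 - μ) * β) := by
    nlinarith [mul_nonneg hz0 (sub_nonneg.2 hcon'), mul_pos hμ0 hD,
      mul_nonneg (sub_nonneg.2 hz1) hD.le]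
  have := (div_le_iff₀ hD).2 key
  linarith
end

section
/- Let T, T₁, T₂, T₃, T_opt ≥ 0 with T = T₁ + T₂ + T₃, and let z ∈ [0,1], μ ∈ (0, 1/2], α ≥ 1, β > 0 satisfy β + α/(1−μ) = 1/μ and β ≥ μ(α−1)/(1−μ)². If μ(z + (1−z)/α)·T₂ + ((1−μ)/α)·T₃ ≤ T_opt and T₁/β + (μz + 1 − z)·T₂ ≤ T_opt, then T ≤ (1/μ)·T_opt. -/
/-- Combination argument for the competitive ratio (Lemma 6): the area bound and the
critical-path bound together imply T ≤ (1/μ)·T_opt. -/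
theorem stmt5 (T T₁ T₂ T₃ Topt z α β μ : ℝ)
    (hT : 0 ≤ T) (hT₁ : 0 ≤ T₁) (hT₂ : 0 ≤ T₂) (hT₃ : 0 ≤ T₃) (hTopt : 0 ≤ Topt)
    (hsum : T = T₁ + T₂ + T₃) (hz0 : 0 ≤ z) (hz1 : z ≤ 1)
    (hμ0 : 0 < μ) (hμ1 : μ ≤ 1 / 2) (hα : 1 ≤ α) (hβ : 0 < β)
    (heq : β + α / (1 - μ) = 1 / μ) (hcon : μ * (α - 1) / (1 - μ) ^ 2 ≤ β)
    (harea : μ * (z + (1 - z) / α) * T₂ + ((1 - μ) / α) * T₃ ≤ Topt)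
    (hpath : T₁ / β + (μ * z + 1 - z) * T₂ ≤ Topt) :
    T ≤ (1 / μ) * Topt := by
  have h1μ : 0 < 1 - μ := by linarith
  have hα0 : 0 < α := by linarith
  have hαne : α ≠ 0 := hα0.ne'
  have hβne : β ≠ 0 := hβ.ne'
  -- division-free forms of the two bounds
  have ha' : μ * (α * z + (1 - z)) * T₂ + (1 - μ) * T₃ ≤ α * Topt := by
    have h := mul_le_mul_of_nonneg_left harea hα0.le
    have c1 : (1 - z) / α * α = 1 - z := div_mul_cancel₀ _ hαne
    have c2 : (1 - μ) / α * α = 1 - μ := div_mul_cancel₀ _ hαne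
    have e1 : α * (μ * (z + (1 - z) / α) * T₂ + ((1 - μ) / α) * T₃)
        = μ * (α * z + (1 - z)) * T₂ + (1 - μ) * T₃ := by
      linear_combination (μ * T₂) * c1 + T₃ * c2
    linarith [e1 ▸ h]
  have hp' : T₁ + β * (μ * z + 1 - z) * T₂ ≤ β * Topt := by
    have h := mul_le_mul_of_nonneg_left hpath hβ.le
    have c1 : T₁ / β * β = T₁ := div_mul_cancel₀ _ hβne
    have e1 : β * (T₁ / β + (μ * z + 1 - z) * T₂)
        = T₁ + β * (μ * z + 1 - z) * T₂ := by
      linear_combination c1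
    linarith [e1 ▸ h]
  -- division-free forms of the parameter relations
  have heq' : β * μ * (1 - μ) + α * μ = 1 - μ := by
    have c1 : α / (1 - μ) * (1 - μ) = α := div_mul_cancel₀ _ h1μ.ne'
    have c2 : 1 / μ * μ = 1 := div_mul_cancel₀ _ hμ0.ne'
    have h := congrArg (fun x => x * ((1 - μ) * μ)) heq
    linear_combination h - μ * c1 + (1 - μ) * c2
  have hcon' : μ * (α - 1) ≤ β * (1 - μ) ^ 2 := by
    rw [div_le_iff₀ (by positivity)] at hcon
    linarith
  have heqT : (β * μ * (1 - μ) + α * μ) * Topt = (1 - μ) * Topt := by rw [heq']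
  have heqT2 : μ * ((β * μ * (1 - μ) + α * μ) * T₂) = μ * ((1 - μ) * T₂) := by
    rw [heq']
  have hprod : 0 ≤ μ * (1 - z) * T₂ * (β * (1 - μ) ^ 2 - μ * (α - 1)) :=
    mul_nonneg (mul_nonneg (mul_nonneg hμ0.le (by linarith)) hT₂) (by linarith)
  -- combine
  have hp2 := mul_le_mul_of_nonneg_left hp' (by positivity : (0:ℝ) ≤ μ * (1 - μ))
  have ha2 := mul_le_mul_of_nonneg_left ha' hμ0.le
  have lhs_eq : μ * (1 - μ) * (T₁ + β * (μ * z + 1 - z) * T₂)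
        + μ * (μ * (α * z + (1 - z)) * T₂ + (1 - μ) * T₃)
      = μ * (1 - μ) * (T₁ + T₂ + T₃)
        + μ * (1 - z) * T₂ * (β * (1 - μ) ^ 2 - μ * (α - 1))
        + (μ * ((β * μ * (1 - μ) + α * μ) * T₂) - μ * ((1 - μ) * T₂)) := by
    ring
  have hsum2 : μ * (1 - μ) * T = μ * (1 - μ) * (T₁ + T₂ + T₃) := by rw [hsum]
  have key : μ * (1 - μ) * T ≤ (1 - μ) * Topt := by
    linarith [hp2, ha2, hprod, heqT, heqT2, lhs_eq, hsum2]
  have hmT : μ * T ≤ Topt := by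
    by_contra h
    push_neg at h
    nlinarith [key, mul_lt_mul_of_pos_left h h1μ]
  have hfin : T ≤ Topt / μ := by
    rw [le_div_iff₀ hμ0]
    linarith [hmT]
  have hrw : (1 / μ) * Topt = Topt / μ := by ring
  linarith [hfin]
end

section
/- For every real w' with 0 < w' and P ≥ 2 an integer, there exists an integer p with 1 ≤ p ≤ P such that, for the function t(p) = w'/p + p − 1 and a(p) = p·t(p), we have a(p) ≤ (4/3)·a(1) and t(p) ≤ (3/2)·min_{1 ≤ q ≤ P} t(q). -/
private lemma aux23 (m : ℕ) : 0 ≤ ((m:ℝ) - 2) * ((m:ℝ) - 3) := by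
  rcases m with _ | _ | _ | n
  · norm_num
  · norm_num
  · norm_num
  · push_cast
    nlinarith [Nat.cast_nonneg (α := ℝ) n]

/-- t is antitone below sqrt w' -/
private lemma tmono (w' a b : ℝ) (ha : 0 < a) (hab : a ≤ b) (h : a * b ≤ w') :
    w' / b + b - 1 ≤ w' / a + a - 1 := by
  have hb : 0 < b := lt_of_lt_of_le ha hab
  have key : w' / b + b - 1 - (w' / a + a - 1) = (b - a) * (a * b - w') / (a * b) := by
    field_simp
    ring
  have h1 : (b - a) * (a * b - w') / (a * b) ≤ 0 := by
    apply div_nonpos_of_nonpos_of_nonneg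
    · exact mul_nonpos_of_nonneg_of_nonpos (by linarith) (by linarith)
    · positivity
  linarith

private lemma tnonneg (w' b : ℝ) (hw : 0 < w') (hb : 1 ≤ b) : 0 ≤ w' / b + b - 1 := by
  have : 0 < w' / b := div_pos hw (by linarith)
  linarith

/-- core: if 3k(k-1) ≤ w' < 3k(k+1) for k = j+1, then t(k) ≤ (3/2) t(m) for all integers m ≥ 1 -/
private lemma core (w' : ℝ) (hw : 0 < w') (j m : ℕ) (hm : 1 ≤ m)
    (h1 : 3 * ((j:ℝ) + 1) * (j:ℝ) ≤ w') (h2 : w' < 3 * ((j:ℝ) + 1) * ((j:ℝ) + 2)) :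
    w' / ((j:ℝ) + 1) + ((j:ℝ) + 1) - 1 ≤ 3 / 2 * (w' / (m:ℝ) + (m:ℝ) - 1) := by
  set K : ℝ := (j:ℝ) + 1 with hK
  set M : ℝ := (m:ℝ) with hM
  have hK0 : (0:ℝ) < K := by positivity
  have hM1 : (1:ℝ) ≤ M := by rw [hM]; exact_mod_cast hm
  have hM0 : (0:ℝ) < M := by linarith
  have hj0 : (0:ℝ) ≤ (j:ℝ) := Nat.cast_nonneg j
  rcases lt_trichotomy m (j+1) with hcmp | hcmp | hcmp
  · -- m ≤ j : t(K) ≤ t(M)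
    have hMj : M ≤ (j:ℝ) := by
      have h' : m ≤ j := Nat.lt_succ_iff.mp hcmp
      rw [hM]; exact_mod_cast h'
    have hmono : w' / K + K - 1 ≤ w' / M + M - 1 := by
      apply tmono w' M K hM0 (by rw [hK]; linarith)
      nlinarith
    have := tnonneg w' M hw hM1
    linarith
  · -- m = j+1
    have : M = K := by rw [hM, hK, hcmp]; push_cast; ring
    rw [this]
    have := tnonneg w' K hw (by rw [hK]; linarith)
    linarith
  · -- m ≥ j+2
    have hMK : K + 1 ≤ M := by
      have : j + 2 ≤ m := hcmp
      rw [hM, hK]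
      exact_mod_cast this
    have lhs_eq : w' / K + K - 1 = (w' + K * (K - 1)) / K := by field_simp; ring
    have rhs_eq : 3 / 2 * (w' / M + M - 1) = 3 * (w' + M * (M - 1)) / (2 * M) := by
      field_simp; ring
    rw [lhs_eq, rhs_eq, div_le_div_iff₀ hK0 (by positivity)]
    -- goal : (w' + K*(K-1)) * (2*M) ≤ 3*(w' + M*(M-1)) * K
    rcases le_or_gt (2 * M) (3 * K) with hb | hb
    · -- 2M ≤ 3K, hence K ≥ 2
      have hK2 : (2:ℝ) ≤ K := by linarith
      nlinarith [sq_nonneg (6*M - 8*K + 5), sq_nonneg (K - 2), mul_nonneg (sub_nonneg.mpr hb) (sub_nonneg.mpr h1), mul_pos hK0 hM0]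
    · -- 2M > 3K
      have hprod : 0 ≤ (2*M - 3*K) * (3*K*(K+1) - w') := by
        apply mul_nonneg (by linarith)
        have : 3 * K * (K + 1) = 3 * ((j:ℝ)+1) * ((j:ℝ)+2) := by rw [hK]; ring
        linarith [this ▸ h2.le]
      rcases Nat.eq_zero_or_pos j with hj | hj
      · -- K = 1
        have hK1 : K = 1 := by rw [hK, hj]; norm_num
        have ha : 0 ≤ (M - 2) * (M - 3) := by rw [hM]; exact aux23 m
        rw [hK1] at hprod ⊢
        nlinarith [ha, hprod]
      · have hK2 : (2:ℝ) ≤ K := by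
          rw [hK]
          have : (1:ℝ) ≤ (j:ℝ) := by exact_mod_cast hj
          linarith
        nlinarith [sq_nonneg (6*M - 8*K - 7), sq_nonneg (K - 2), hprod]

private lemma exists_j (w' : ℝ) (hw : 0 < w') :
    ∀ n : ℕ, 1 ≤ n → w' < 3 * (n:ℝ) * ((n:ℝ) + 1) →
      ∃ j : ℕ, j + 1 ≤ n ∧ 3 * ((j:ℝ) + 1) * (j:ℝ) ≤ w' ∧ w' < 3 * ((j:ℝ) + 1) * ((j:ℝ) + 2) := by
  intro n
  induction n with
  | zero => intro h; omega
  | succ n ih =>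
    intro _ hlt
    rcases Nat.eq_zero_or_pos n with hn | hn
    · subst hn
      refine ⟨0, le_refl _, by push_cast; nlinarith, by push_cast at hlt ⊢; nlinarith⟩
    · by_cases hlt2 : w' < 3 * (n:ℝ) * ((n:ℝ) + 1)
      · obtain ⟨j, hj1, hj2, hj3⟩ := ih hn hlt2
        exact ⟨j, by omega, hj2, hj3⟩
      · refine ⟨n, le_refl _, ?_, ?_⟩
        · push_cast; nlinarith [not_lt.mp hlt2]
        · push_cast at hlt ⊢; nlinarith

/-- Communication model (Lemma 8): for any w' > 0 there is an integer allocation p ∈ [1, P]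
with area at most 4/3 of the minimum area and time at most 3/2 of the minimum time. -/
theorem stmt8 (w' : ℝ) (hw : 0 < w') (P : ℕ) (hP : 2 ≤ P) :
    ∃ p : ℕ, 1 ≤ p ∧ p ≤ P ∧
      (p : ℝ) * (w' / (p : ℝ) + (p : ℝ) - 1) ≤ (4 / 3) * ((1 : ℝ) * (w' / 1 + 1 - 1)) ∧
      ∀ q : ℕ, 1 ≤ q → q ≤ P →
        w' / (p : ℝ) + (p : ℝ) - 1 ≤ (3 / 2) * (w' / (q : ℝ) + (q : ℝ) - 1) := by
  have hP1 : (1:ℝ) ≤ (P:ℝ) := by exact_mod_cast Nat.one_le_of_lt hP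
  have hP2 : (2:ℝ) ≤ (P:ℝ) := by exact_mod_cast hP
  by_cases hcase : w' < 3 * (P:ℝ) * ((P:ℝ) - 1)
  · -- find j with 3(j+1)j ≤ w' < 3(j+1)(j+2), j+1 ≤ P-1
    have hn1 : 1 ≤ P - 1 := by omega
    have hcast : ((P - 1 : ℕ) : ℝ) = (P:ℝ) - 1 := by
      have : (1:ℕ) ≤ P := by omega
      push_cast [Nat.cast_sub this]
      ring
    have hlt : w' < 3 * ((P-1:ℕ):ℝ) * (((P-1:ℕ):ℝ) + 1) := by
      rw [hcast]; ring_nf; ring_nf at hcase; linarith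
    obtain ⟨j, hj1, hj2, hj3⟩ := exists_j w' hw (P-1) hn1 hlt
    refine ⟨j + 1, by omega, by omega, ?_, ?_⟩
    · -- area
      have hj0 : (0:ℝ) ≤ (j:ℝ) := Nat.cast_nonneg j
      have hp0 : (0:ℝ) < ((j:ℝ) + 1) := by linarith
      push_cast
      have expand : ((j:ℝ) + 1) * (w' / ((j:ℝ)+1) + ((j:ℝ)+1) - 1) = w' + ((j:ℝ)+1) * (j:ℝ) := by
        field_simp; ring
      rw [expand]
      rw [div_one]
      nlinarith
    · intro q hq1 hq2
      push_cast
      exact core w' hw j q hq1 hj2 hj3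
  · -- p = P
    push_neg at hcase
    refine ⟨P, by omega, le_refl _, ?_, ?_⟩
    · have hp0 : (0:ℝ) < (P:ℝ) := by linarith
      have expand : (P:ℝ) * (w' / (P:ℝ) + (P:ℝ) - 1) = w' + (P:ℝ) * ((P:ℝ) - 1) := by
        field_simp; ring
      rw [expand, div_one]
      nlinarith
    · intro q hq1 hq2
      have hq1' : (1:ℝ) ≤ (q:ℝ) := by exact_mod_cast hq1
      have hq2' : (q:ℝ) ≤ (P:ℝ) := by exact_mod_cast hq2
      have hmono : w' / (P:ℝ) + (P:ℝ) - 1 ≤ w' / (q:ℝ) + (q:ℝ) - 1 := by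
        apply tmono w' (q:ℝ) (P:ℝ) (by linarith) hq2'
        nlinarith
      have := tnonneg w' (q:ℝ) hw hq1'
      linarith
end

section
/- For the communication model function t(p) = (w'/p + p − 1) with p ranging over positive integers and t_min = min over integer allocations, the ratio f(w', p) = t(p)/t_min is non-decreasing in w' on the interval w' ∈ [p², ∞) for each fixed integer p ≥ 1. -/
/-- Communication model: for fixed integer p ≥ 1, the ratio t(p)/t_min is non-decreasing
in the normalized work w' on [p², ∞). -/
theorem stmt9 (p : ℕ) (hp : 1 ≤ p) (w1 w2 : ℝ) (h1 : (p : ℝ) ^ 2 ≤ w1) (h12 : w1 ≤ w2)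
    (t1min t2min : ℝ)
    (h1min : IsLeast {x : ℝ | ∃ q : ℕ, 1 ≤ q ∧ x = w1 / (q : ℝ) + (q : ℝ) - 1} t1min)
    (h2min : IsLeast {x : ℝ | ∃ q : ℕ, 1 ≤ q ∧ x = w2 / (q : ℝ) + (q : ℝ) - 1} t2min) :
    (w1 / (p : ℝ) + (p : ℝ) - 1) / t1min ≤ (w2 / (p : ℝ) + (p : ℝ) - 1) / t2min := by
  obtain ⟨q, hq1, hqeq⟩ := h1min.1
  have hP : (1 : ℝ) ≤ (p : ℝ) := by exact_mod_cast hp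
  have hQ : (1 : ℝ) ≤ (q : ℝ) := by exact_mod_cast hq1
  have hP0 : (0 : ℝ) < (p : ℝ) := lt_of_lt_of_le zero_lt_one hP
  have hQ0 : (0 : ℝ) < (q : ℝ) := lt_of_lt_of_le zero_lt_one hQ
  have hw1 : (1 : ℝ) ≤ w1 := le_trans (by nlinarith) h1
  have hw2 : (1 : ℝ) ≤ w2 := le_trans hw1 h12
  -- the optimal q for w1 satisfies q ≥ p
  have hqp : (p : ℝ) ≤ (q : ℝ) := by
    by_contra hlt
    push_neg at hlt
    have hq1n : (q : ℝ) + 1 ≤ (p : ℝ) := by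
      have : q + 1 ≤ p := by exact_mod_cast Nat.succ_le_of_lt (by exact_mod_cast hlt)
      exact_mod_cast this
    have hle : t1min ≤ w1 / (p : ℝ) + (p : ℝ) - 1 := h1min.2 ⟨p, hp, rfl⟩
    rw [hqeq] at hle
    have h2 : ((p : ℝ) * q) * (w1 / (q : ℝ) + (q : ℝ) - 1) ≤
        ((p : ℝ) * q) * (w1 / (p : ℝ) + (p : ℝ) - 1) :=
      mul_le_mul_of_nonneg_left hle (le_of_lt (mul_pos hP0 hQ0))
    have e1 : ((p : ℝ) * q) * (w1 / (q : ℝ)) = (p : ℝ) * w1 := by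
      field_simp
    have e2 : ((p : ℝ) * q) * (w1 / (p : ℝ)) = (q : ℝ) * w1 := by
      field_simp
    nlinarith [mul_pos hP0 hQ0, mul_le_mul_of_nonneg_right h1 (le_of_lt (sub_pos.mpr hlt)),
      sq_nonneg ((p:ℝ) - q)]
  have ht1pos : 0 < t1min := by
    rw [hqeq]
    have : 0 < w1 / (q : ℝ) := div_pos (by linarith) hQ0
    linarith
  have ht2pos : 0 < t2min := by
    obtain ⟨r, hr1, hreq⟩ := h2min.1
    have hR : (1 : ℝ) ≤ (r : ℝ) := by exact_mod_cast hr1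
    have : 0 < w2 / (r : ℝ) := div_pos (by linarith) (by linarith)
    rw [hreq]; linarith
  have ht2le : t2min ≤ w2 / (q : ℝ) + (q : ℝ) - 1 := h2min.2 ⟨q, hq1, rfl⟩
  have hA1 : 0 < w1 / (p : ℝ) + (p : ℝ) - 1 := by
    have : 0 < w1 / (p : ℝ) := div_pos (by linarith) hP0
    linarith
  rw [div_le_div_iff₀ ht1pos ht2pos]
  have step1 : (w1 / (p : ℝ) + (p : ℝ) - 1) * t2min ≤
      (w1 / (p : ℝ) + (p : ℝ) - 1) * (w2 / (q : ℝ) + (q : ℝ) - 1) :=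
    mul_le_mul_of_nonneg_left ht2le (le_of_lt hA1)
  have step2 : (w1 / (p : ℝ) + (p : ℝ) - 1) * (w2 / (q : ℝ) + (q : ℝ) - 1) ≤
      (w2 / (p : ℝ) + (p : ℝ) - 1) * (w1 / (q : ℝ) + (q : ℝ) - 1) := by
    rw [← sub_nonneg]
    have key : (w2 / (p : ℝ) + (p : ℝ) - 1) * (w1 / (q : ℝ) + (q : ℝ) - 1)
        - (w1 / (p : ℝ) + (p : ℝ) - 1) * (w2 / (q : ℝ) + (q : ℝ) - 1)
        = (w2 - w1) * ((q : ℝ) * ((q : ℝ) - 1) - (p : ℝ) * ((p : ℝ) - 1)) / ((p : ℝ) * q) := by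
      field_simp; ring
    rw [key]
    apply div_nonneg _ (le_of_lt (mul_pos hP0 hQ0))
    apply mul_nonneg (by linarith)
    nlinarith
  rw [hqeq]
  linarith
end

section
/- Let α > 1, and consider the Amdahl execution time t(p) = w/p + d with w ≥ 0, d > 0, on integer allocations p ∈ [1, P]. Setting p = min(⌈(α−1)·w/d⌉, P), the area a(p) = w + d·p satisfies a(p) ≤ α·(w + d), and the time satisfies t(p) ≤ (α/(α−1))·(w/P + d). -/
/-- Amdahl's model: with p = min(⌈(α−1)w/d⌉, P), the area satisfies a(p) ≤ α(w+d) and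
the time satisfies t(p) ≤ (α/(α−1))·(w/P + d). -/
theorem stmt10 (α w d : ℝ) (hα : 1 < α) (hw : 0 ≤ w) (hd : 0 < d) (P : ℕ) (hP : 1 ≤ P) :
    ∀ p : ℕ, p = min ⌈(α - 1) * w / d⌉₊ P →
      (w + d * (p : ℝ) ≤ α * (w + d)) ∧
      (w / (p : ℝ) + d ≤ (α / (α - 1)) * (w / (P : ℝ) + d)) := by
  intro p hp
  have hc : (0:ℝ) < α - 1 := by linarith
  have hPpos : (0:ℝ) < (P:ℝ) := by exact_mod_cast Nat.lt_of_lt_of_le Nat.zero_lt_one hP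
  have hfac : (1:ℝ) ≤ α / (α - 1) := by
    rw [le_div_iff₀ hc]; linarith
  rcases eq_or_lt_of_le hw with hw0 | hwpos
  · -- w = 0
    have hq : ⌈(α - 1) * w / d⌉₊ = 0 := by
      rw [← hw0]
      simp
    rw [hq] at hp
    simp at hp
    subst hp
    rw [← hw0]
    simp
    constructor
    · positivity
    · nlinarith [mul_le_mul_of_nonneg_right hfac hd.le]
  · -- w > 0
    set x : ℝ := (α - 1) * w / d with hx
    have hxpos : 0 < x := by positivity
    have hxq : x ≤ (⌈x⌉₊ : ℝ) := Nat.le_ceil x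
    have hql : (⌈x⌉₊ : ℝ) < x + 1 := Nat.ceil_lt_add_one hxpos.le
    have hdx : d * x = (α - 1) * w := by
      rw [hx, mul_div_cancel₀ _ hd.ne']
    have hpq : (p:ℝ) ≤ (⌈x⌉₊ : ℝ) := by
      exact_mod_cast hp ▸ min_le_left _ _
    constructor
    · nlinarith [mul_le_mul_of_nonneg_left hpq hd.le,
        mul_le_mul_of_nonneg_left hql.le hd.le]
    · rcases le_or_gt ⌈x⌉₊ P with hle | hgt
      · have hpe : p = ⌈x⌉₊ := by rw [hp, min_eq_left hle]
        have hqpos : (0:ℝ) < (⌈x⌉₊ : ℝ) := lt_of_lt_of_le hxpos hxq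
        have hkey : w / (⌈x⌉₊ : ℝ) ≤ d / (α - 1) := by
          rw [div_le_div_iff₀ hqpos hc]
          nlinarith [mul_le_mul_of_nonneg_left hxq hd.le]
        have hwP : 0 ≤ w / (P:ℝ) := by positivity
        rw [hpe]
        have : α / (α - 1) * d = d + d / (α - 1) := by
          field_simp; ring
        calc w / (⌈x⌉₊ : ℝ) + d ≤ d / (α - 1) + d := by linarith
          _ = α / (α - 1) * d := by rw [this]; ring
          _ ≤ α / (α - 1) * (w / (P:ℝ) + d) := by
              apply mul_le_mul_of_nonneg_left _ (by positivity)
              linarith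
      · have hpe : p = P := by rw [hp, min_eq_right hgt.le]
        rw [hpe]
        have hpos : 0 < w / (P:ℝ) + d := by positivity
        nlinarith [mul_le_mul_of_nonneg_right hfac hpos.le]
end

section
/- The function g(x) = x/(1−μ) + x/(x−1) over x > 1, with μ = (1 − sqrt(8√2 − 11))/2, attains its minimum at x = (√2 + 1 + sqrt(2√2 − 1))/2, and the minimum value equals 1/μ = 2/(1 − sqrt(8√2 − 11)). -/
/-- The function g(x) = x/(1−μ) + x/(x−1) over x > 1, with μ = (1 − √(8√2 − 11))/2,
attains its minimum at x* = (√2 + 1 + √(2√2 − 1))/2, with minimum value 1/μ. -/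
theorem stmt11 :
    let μ : ℝ := (1 - Real.sqrt (8 * Real.sqrt 2 - 11)) / 2
    let x₀ : ℝ := (Real.sqrt 2 + 1 + Real.sqrt (2 * Real.sqrt 2 - 1)) / 2
    (∀ x : ℝ, 1 < x → x₀ / (1 - μ) + x₀ / (x₀ - 1) ≤ x / (1 - μ) + x / (x - 1)) ∧
    x₀ / (1 - μ) + x₀ / (x₀ - 1) = 1 / μ ∧
    1 / μ = 2 / (1 - Real.sqrt (8 * Real.sqrt 2 - 11)) := by
  intro μ x₀
  set s : ℝ := Real.sqrt 2 with hs_def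
  have hs2 : s ^ 2 = 2 := Real.sq_sqrt (by norm_num)
  have hs0 : 0 ≤ s := Real.sqrt_nonneg 2
  have hs_lb : 1.375 < s := by nlinarith
  have hs_ub : s < 1.5 := by nlinarith
  set t : ℝ := Real.sqrt (2 * s - 1) with ht_def
  have ht2 : t ^ 2 = 2 * s - 1 := Real.sq_sqrt (by nlinarith)
  have ht0 : 0 ≤ t := Real.sqrt_nonneg _
  have ht_pos : 0 < t := Real.sqrt_pos.mpr (by nlinarith)
  set r : ℝ := Real.sqrt (8 * s - 11) with hr_def
  have hr2 : r ^ 2 = 8 * s - 11 := Real.sq_sqrt (by nlinarith)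
  have hr0 : 0 ≤ r := Real.sqrt_nonneg _
  have hr1 : r < 1 := by nlinarith
  have hrt : r = (s - 1) * t := by
    have h1 : (r - (s - 1) * t) * (r + (s - 1) * t) = 0 := by
      have : ((s - 1) * t) ^ 2 = 8 * s - 11 := by
        have : ((s-1)*t)^2 = (s-1)^2 * t^2 := by ring
        rw [this, ht2]; nlinarith
      nlinarith [this, hr2]
    have h2 : 0 < r + (s - 1) * t := by nlinarith
    have := mul_eq_zero.mp h1
    rcases this with h | h
    · linarith
    · linarith
  have hμ : μ = (1 - r) / 2 := rfl
  have hx : x₀ = (s + 1 + t) / 2 := rfl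
  clear_value μ x₀
  have hμpos : 0 < μ := by rw [hμ]; linarith
  have hc : (0:ℝ) < 1 - μ := by rw [hμ]; linarith
  have hx1 : 1 < x₀ := by rw [hx]; nlinarith
  have ha1 : 0 < x₀ - 1 := by linarith
  have he : (x₀ - 1) ^ 2 = 1 - μ := by
    rw [hx, hμ, hrt]
    linear_combination hs2 / 4 + ht2 / 4
  have hval : μ * x₀ ^ 2 = 1 - μ := by
    rw [hx, hμ, hrt]
    linear_combination (-s*t - 4*s - 3*t + 3) / 8 * hs2 + (-s*t + t + 3 - 2*s^2) / 8 * ht2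
  refine ⟨?_, ?_, ?_⟩
  · intro x hx'
    have hx1' : 0 < x - 1 := by linarith
    rw [← he]
    have key : x / (x₀ - 1) ^ 2 + x / (x - 1) - (x₀ / (x₀ - 1) ^ 2 + x₀ / (x₀ - 1))
        = (x - x₀) ^ 2 / ((x₀ - 1) ^ 2 * (x - 1)) := by
      field_simp
      ring
    have hnn : 0 ≤ (x - x₀) ^ 2 / ((x₀ - 1) ^ 2 * (x - 1)) := by positivity
    linarith
  · have hgx : x₀ / (1 - μ) + x₀ / (x₀ - 1) = x₀ ^ 2 / (1 - μ) := by
      rw [← he]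
      field_simp
      ring
    rw [hgx, div_eq_div_iff hc.ne' hμpos.ne']
    linear_combination hval
  · rw [hμ]
    rw [one_div, inv_div]
end

section
/- For all reals w' > 49 and d' > 0, and p with (w' − √w'/2)/(√w' + d') ≤ p ≤ (w'+d')/(√w'+d') + 1/2, the ratio (w'/p + d' + p − 1)/(√w' + d') is at most 1/(1 − 1/(2√w')) + 1 ≤ 27/13. -/
/-- Time bound in Case 3 of the general model analysis: for w' > 49, d' > 0, and any
real p with (w' − √w'/2)/(√w' + d') ≤ p ≤ (w'+d')/(√w'+d') + 1/2, the normalized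
time ratio is at most 1/(1 − 1/(2√w')) + 1 ≤ 27/13. -/
theorem stmt15 (w' d' : ℝ) (hw : 49 < w') (hd : 0 < d') :
    ∀ p : ℝ, (w' - Real.sqrt w' / 2) / (Real.sqrt w' + d') ≤ p →
      p ≤ (w' + d') / (Real.sqrt w' + d') + 1 / 2 →
      (w' / p + d' + p - 1) / (Real.sqrt w' + d') ≤ 1 / (1 - 1 / (2 * Real.sqrt w')) + 1 ∧
      1 / (1 - 1 / (2 * Real.sqrt w')) + 1 ≤ 27 / 13 := by
  intro p hp1 hp2
  set s := Real.sqrt w' with hs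
  have hs7 : 7 < s := by
    have h49 : Real.sqrt 49 < s := Real.sqrt_lt_sqrt (by norm_num) hw
    have : Real.sqrt 49 = 7 := by
      rw [show (49:ℝ) = 7^2 by norm_num, Real.sqrt_sq]; norm_num
    linarith
  have hs0 : 0 < s := by linarith
  have hsq : s * s = w' := Real.mul_self_sqrt (by linarith)
  have hsd : 0 < s + d' := by linarith
  have hc : 0 < 1 - 1/(2*s) := by
    rw [sub_pos, div_lt_one (by linarith)]; linarith
  rw [div_le_iff₀ hsd] at hp1
  have hp0 : 0 < p := by nlinarith
  have h2nd : 1 / (1 - 1/(2*s)) + 1 ≤ 27/13 := by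
    have h14 : 1/(2*s) ≤ 1/14 := by
      rw [div_le_div_iff₀ (by linarith) (by norm_num)]; linarith
    have : 1/(1-1/(2*s)) ≤ 14/13 := by
      rw [div_le_div_iff₀ hc (by norm_num)]; linarith
    linarith
  refine ⟨?_, h2nd⟩
  have hA : w'/p ≤ (s+d')/(1-1/(2*s)) := by
    rw [div_le_div_iff₀ hp0 hc]
    have h2 : w' - s/2 ≤ (s+d') * p := by nlinarith
    have heq : w' * (1 - 1/(2*s)) = w' - s/2 := by
      field_simp
      nlinarith
    linarith
  have hB : d' + p - 1 ≤ s + d' := by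
    have hx : (w' + d')/(s + d') ≤ s + 1/2 := by
      rw [div_le_iff₀ hsd]; nlinarith
    linarith
  rw [div_le_iff₀ hsd]
  have heq2 : (1/(1-1/(2*s)) + 1)*(s+d') = (s+d')/(1-1/(2*s)) + (s+d') := by ring
  linarith
end

section
/- Let f(w) = (1 + 2/w)/(1−μ) + 1/(1/2 + 1/w) with μ = (23 − sqrt 313)/18. Then f is decreasing on (0, w⁰) where w⁰ = (2 + 2·sqrt(2 − 2μ))/(1 − 2μ) > 6; consequently, for all w ∈ (0, 6], f(w) ≥ f(6) = 4/(3(1−μ)) + 3/2 = 1/μ. -/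
/-- Case 1 of the communication-model lower bound: f(w) = (1 + 2/w)/(1−μ) + 1/(1/2 + 1/w)
with μ = (23 − √313)/18 is strictly decreasing on (0, w⁰), where
w⁰ = (2 + 2√(2 − 2μ))/(1 − 2μ) > 6; hence f(w) ≥ f(6) = 4/(3(1−μ)) + 3/2 = 1/μ on (0, 6]. -/
theorem stmt17 :
    let μ : ℝ := (23 - Real.sqrt 313) / 18
    let f : ℝ → ℝ := fun w => (1 + 2 / w) / (1 - μ) + 1 / (1 / 2 + 1 / w)
    let w₀ : ℝ := (2 + 2 * Real.sqrt (2 - 2 * μ)) / (1 - 2 * μ)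
    6 < w₀ ∧ StrictAntiOn f (Set.Ioo 0 w₀) ∧
    (∀ w : ℝ, 0 < w → w ≤ 6 → f 6 ≤ f w) ∧
    f 6 = 4 / (3 * (1 - μ)) + 3 / 2 ∧
    4 / (3 * (1 - μ)) + 3 / 2 = 1 / μ := by
  intro μ f w₀
  set s : ℝ := Real.sqrt 313 with hs_def
  have hs2 : s ^ 2 = 313 := Real.sq_sqrt (by norm_num)
  have hs_lb : (17 : ℝ) < s := by
    nlinarith [Real.sqrt_nonneg (313 : ℝ)]
  have hs_ub : s < 18 := by
    nlinarith [Real.sqrt_nonneg (313 : ℝ)]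
  have hμ_def : μ = (23 - s) / 18 := rfl
  have hμ_lb : (5 : ℝ) / 18 < μ := by rw [hμ_def]; linarith
  have hμ_ub : μ < 1 / 3 := by rw [hμ_def]; linarith
  have h1μ : (0 : ℝ) < 1 - μ := by linarith
  have h12μ : (0 : ℝ) < 1 - 2 * μ := by linarith
  -- t = sqrt(2 - 2μ)
  set t : ℝ := Real.sqrt (2 - 2 * μ) with ht_def
  have ht2 : t ^ 2 = 2 - 2 * μ := Real.sq_sqrt (by linarith)
  have ht1 : 1 < t := by nlinarith [Real.sqrt_nonneg (2 - 2 * μ)]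
  have hw₀_def : w₀ = (2 + 2 * t) / (1 - 2 * μ) := rfl
  -- w₀ > 6
  have hw₀ : 6 < w₀ := by
    rw [hw₀_def, lt_div_iff₀ h12μ]
    nlinarith
  -- key quadratic fact: for 0 < y < w₀, (1-2μ) y^2 - 4y - 4 < 0
  have hquad : ∀ y : ℝ, 0 < y → y < w₀ → (1 - 2 * μ) * y ^ 2 - 4 * y - 4 < 0 := by
    intro y hy hyw
    rw [hw₀_def, lt_div_iff₀ h12μ] at hyw
    nlinarith [mul_pos hy h12μ, sq_nonneg (y * (1 - 2 * μ) - (2 + 2 * t))]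
  -- strict antitonicity
  have hanti : StrictAntiOn f (Set.Ioo 0 w₀) := by
    intro x hx y hy hxy
    obtain ⟨hx0, hxw⟩ := hx
    obtain ⟨hy0, hyw⟩ := hy
    have hkey : (1 - 2 * μ) * x * y - 2 * x - 2 * y - 4 < 0 := by
      have hq := hquad y hy0 hyw
      nlinarith [mul_pos hy0 hy0]
    have hx2 : (0 : ℝ) < x + 2 := by linarith
    have hy2 : (0 : ℝ) < y + 2 := by linarith
    have hdiff : f x - f y =
        2 * (y - x) * ((x + 2) * (y + 2) - 2 * x * y * (1 - μ)) /
          (x * y * (1 - μ) * (x + 2) * (y + 2)) := by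
      simp only [f]
      field_simp
      ring
    have hnum : 0 < 2 * (y - x) * ((x + 2) * (y + 2) - 2 * x * y * (1 - μ)) := by
      apply mul_pos (by linarith)
      nlinarith
    have hden : 0 < x * y * (1 - μ) * (x + 2) * (y + 2) := by positivity
    have : 0 < f x - f y := hdiff ▸ div_pos hnum hden
    linarith
  refine ⟨hw₀, hanti, ?_, ?_, ?_⟩
  · intro w hw hw6
    rcases eq_or_lt_of_le hw6 with h | h
    · rw [h]
    · exact le_of_lt (hanti ⟨hw, lt_trans h hw₀⟩ ⟨by norm_num, hw₀⟩ h)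
  · simp only [f]
    have h : (1 - μ) ≠ 0 := h1μ.ne'
    field_simp
    ring
  · have hμ0 : μ ≠ 0 := by positivity
    have hquadμ : 9 * μ ^ 2 - 23 * μ + 6 = 0 := by
      rw [hμ_def]
      linear_combination hs2 / 36
    rw [div_add_div _ _ (by positivity : (3 : ℝ) * (1 - μ) ≠ 0) (two_ne_zero),
      div_eq_div_iff (by positivity) (by positivity)]
    linear_combination (-6 : ℝ) * hquadμ + (5 / 36 : ℝ) * hs2
end
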